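/- arXiv:0908.2822 — 9 statements merged into one kernel-verified Lean document; each statement's English description precedes it below -/
import Mathlib

section
/- Multiplying the six three-leg factors of the master system centered at x_k yields the general discrete relativistic Toda type equation: if P_N = ((X̃+βX)/(γX̃+δX))·((δX+λΨ̃)/(βλX+Ψ̃))·((λX-γΦ̃₊)/(X-λΦ̃₊)) = 1 and analogously the five other three-leg equations (E), (SE), (S), (W), (NW) hold (with X = e^{x_k} etc.), then ((e^{x̃_k-x_k}+β)/(γe^{x̃_k-x_k}+δ))·((γe^{x_k-x̲_k}+δ)/(e^{x_k-x̲_k}+β))·((γe^{x_{k+1}-x_k}+η)/(e^{x_{k+1}-x_k}+ε))·((e^{x_k-x_{k-1}}+ε)/(γe^{x_k-x_{k-1}}+η))·((βe^{x̲_{k+1}-x_k}-ε)/(δe^{x̲_{k+1}-x_k}-η))·((δe^{x_k-x̃_{k-1}}-η)/(βe^{x_k-x̃_{k-1}}-ε)) = 1, since the auxiliary variables Ψ_k, Ψ_{k+1}, Ψ̃_k, Φ_{k+1}, Φ̃_k, Φ̃_{k+1} cancel telescopically. -/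
/-!
Each three-leg equation has the form `a * (p / q) * (q' / p') = 1`, where the second leg
`q' / p'` is the inverse of the first leg `p' / q'` of the next equation around the vertex
`x_k` (in the order N, E, SE, S, W, NW). In the product of all six equations the legs cancel
in pairs (each leg is nonzero, being a factor of a product equal to `1`), leaving the
product of the six edge factors `a`. These are the factors of the Toda equation, cleared of
the common denominator `X = e^{x_k}` or `e^{x̲_k}`, `e^{x_{k-1}}`, `e^{x̃_{k-1}}`.
-/

open Finset

theorem prod_eq_one_of_mul_div_perm_eq_one {ι G₀ : Type*} [Fintype ι] [CommGroupWithZero G₀]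
    (σ : Equiv.Perm ι) (a p q : ι → G₀)
    (h : ∀ i, a i * (p i / q i) * (q (σ i) / p (σ i)) = 1) :
    ∏ i, a i = 1 := by
  have hleg : ∀ i, p i / q i ≠ 0 := fun i =>
    right_ne_zero_of_mul (left_ne_zero_of_mul_eq_one (h i))
  have hlegs : ∏ i, p i / q i ≠ 0 := prod_ne_zero_iff.mpr fun i _ => hleg i
  calc ∏ i, a i
      = (∏ i, a i) * (∏ i, p i / q i) * (∏ i, p (σ i) / q (σ i))⁻¹ := by
        rw [Equiv.prod_comp σ (fun i => p i / q i), mul_inv_cancel_right₀ hlegs]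
    _ = ∏ i, a i * (p i / q i) * (q (σ i) / p (σ i)) := by
        simp only [prod_mul_distrib, ← prod_inv_distrib, inv_div]
    _ = 1 := prod_eq_one fun i _ => h i

theorem master_three_leg_product_general
    (β γ δ ε η lam : ℂ)
    (X Xt Xd Xp Xm Xu Xv Psik Psik1 Psitk Phik1 Phitk Phitk1 : ℂ)
    (hX : X ≠ 0) (hXd : Xd ≠ 0) (hXm : Xm ≠ 0) (hXv : Xv ≠ 0)
    -- the six three-leg equations
    (hN : ((Xt + β * X) / (γ * Xt + δ * X)) *
          ((δ * X + lam * Psitk) / (β * lam * X + Psitk)) *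
          ((lam * X - γ * Phitk1) / (X - lam * Phitk1)) = 1)
    (hE : ((γ * Xp + η * X) / (Xp + ε * X)) *
          ((X - lam * Phitk1) / (lam * X - γ * Phitk1)) *
          ((ε * lam * X + Psik1) / (η * X + lam * Psik1)) = 1)
    (hSE : ((β * Xu - ε * X) / (δ * Xu - η * X)) *
           ((η * X + lam * Psik1) / (ε * lam * X + Psik1)) *
           ((lam * X + δ * Phik1) / (X + β * lam * Phik1)) = 1)
    (hS : ((γ * X + δ * Xd) / (X + β * Xd)) *
          ((X + β * lam * Phik1) / (lam * X + δ * Phik1)) *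
          ((lam * X - Psik) / (γ * X - lam * Psik)) = 1)
    (hW : ((X + ε * Xm) / (γ * X + η * Xm)) *
          ((γ * X - lam * Psik) / (lam * X - Psik)) *
          ((lam * X + η * Phitk) / (X + ε * lam * Phitk)) = 1)
    (hNW : ((δ * X - η * Xv) / (β * X - ε * Xv)) *
           ((X + ε * lam * Phitk) / (lam * X + η * Phitk)) *
           ((β * lam * X + Psitk) / (δ * X + lam * Psitk)) = 1) :
    ((Xt / X + β) / (γ * (Xt / X) + δ)) *
    ((γ * (X / Xd) + δ) / (X / Xd + β)) *
    ((γ * (Xp / X) + η) / (Xp / X + ε)) *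
    ((X / Xm + ε) / (γ * (X / Xm) + η)) *
    ((β * (Xu / X) - ε) / (δ * (Xu / X) - η)) *
    ((δ * (X / Xv) - η) / (β * (X / Xv) - ε)) = 1 := by
  have hedges := prod_eq_one_of_mul_div_perm_eq_one (finRotate 6)
    ![(Xt + β * X) / (γ * Xt + δ * X), (γ * Xp + η * X) / (Xp + ε * X),
      (β * Xu - ε * X) / (δ * Xu - η * X), (γ * X + δ * Xd) / (X + β * Xd),
      (X + ε * Xm) / (γ * X + η * Xm), (δ * X - η * Xv) / (β * X - ε * Xv)]
    ![δ * X + lam * Psitk, X - lam * Phitk1, η * X + lam * Psik1,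
      X + β * lam * Phik1, γ * X - lam * Psik, X + ε * lam * Phitk]
    ![β * lam * X + Psitk, lam * X - γ * Phitk1, ε * lam * X + Psik1,
      lam * X + δ * Phik1, lam * X - Psik, lam * X + η * Phitk]
    (by intro i; fin_cases i <;> simpa)
  rw [Fin.prod_univ_six] at hedges
  simp only [Matrix.cons_val] at hedges
  simp only [mul_div_assoc', div_add' _ _ _ hX, div_sub' hX, div_add' _ _ _ hXd,
    div_add' _ _ _ hXm, div_sub' hXv, div_div_div_cancel_right₀ hX,
    div_div_div_cancel_right₀ hXd, div_div_div_cancel_right₀ hXm, div_div_div_cancel_right₀ hXv]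
  linear_combination hedges

/-- Multiplying the six three-leg forms (N), (E), (SE), (S), (W), (NW) of the
master system centered at `x_k` yields the general discrete relativistic Toda
type equation; the auxiliary variables cancel telescopically.
Here `X = e^{x_k}`, `Xt = e^{x̃_k}`, `Xd = e^{x̲_k}`, `Xp = e^{x_{k+1}}`,
`Xm = e^{x_{k-1}}`, `Xu = e^{x̲_{k+1}}`, `Xv = e^{x̃_{k-1}}`, and
`Psik, Psik1, Psitk, Phik1, Phitk, Phitk1` are the auxiliary (white-vertex)
variables. -/
theorem master_three_leg_product
    (β γ δ ε η lam : ℂ)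
    (X Xt Xd Xp Xm Xu Xv Psik Psik1 Psitk Phik1 Phitk Phitk1 : ℂ)
    (hX : X ≠ 0) (hXd : Xd ≠ 0) (hXm : Xm ≠ 0) (hXv : Xv ≠ 0)
    -- nonvanishing of all denominators appearing in the six three-leg forms
    (d1 : γ * Xt + δ * X ≠ 0) (d2 : β * lam * X + Psitk ≠ 0)
    (d3 : X - lam * Phitk1 ≠ 0) (d4 : Xp + ε * X ≠ 0)
    (d5 : lam * X - γ * Phitk1 ≠ 0) (d6 : η * X + lam * Psik1 ≠ 0)
    (d7 : δ * Xu - η * X ≠ 0) (d8 : ε * lam * X + Psik1 ≠ 0)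
    (d9 : X + β * lam * Phik1 ≠ 0) (d10 : X + β * Xd ≠ 0)
    (d11 : lam * X + δ * Phik1 ≠ 0) (d12 : γ * X - lam * Psik ≠ 0)
    (d13 : γ * X + η * Xm ≠ 0) (d14 : lam * X - Psik ≠ 0)
    (d15 : X + ε * lam * Phitk ≠ 0) (d16 : β * X - ε * Xv ≠ 0)
    (d17 : lam * X + η * Phitk ≠ 0) (d18 : δ * X + lam * Psitk ≠ 0)
    -- the six three-leg equations
    (hN : ((Xt + β * X) / (γ * Xt + δ * X)) *
          ((δ * X + lam * Psitk) / (β * lam * X + Psitk)) *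
          ((lam * X - γ * Phitk1) / (X - lam * Phitk1)) = 1)
    (hE : ((γ * Xp + η * X) / (Xp + ε * X)) *
          ((X - lam * Phitk1) / (lam * X - γ * Phitk1)) *
          ((ε * lam * X + Psik1) / (η * X + lam * Psik1)) = 1)
    (hSE : ((β * Xu - ε * X) / (δ * Xu - η * X)) *
           ((η * X + lam * Psik1) / (ε * lam * X + Psik1)) *
           ((lam * X + δ * Phik1) / (X + β * lam * Phik1)) = 1)
    (hS : ((γ * X + δ * Xd) / (X + β * Xd)) *
          ((X + β * lam * Phik1) / (lam * X + δ * Phik1)) *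
          ((lam * X - Psik) / (γ * X - lam * Psik)) = 1)
    (hW : ((X + ε * Xm) / (γ * X + η * Xm)) *
          ((γ * X - lam * Psik) / (lam * X - Psik)) *
          ((lam * X + η * Phitk) / (X + ε * lam * Phitk)) = 1)
    (hNW : ((δ * X - η * Xv) / (β * X - ε * Xv)) *
           ((X + ε * lam * Phitk) / (lam * X + η * Phitk)) *
           ((β * lam * X + Psitk) / (δ * X + lam * Psitk)) = 1) :
    ((Xt / X + β) / (γ * (Xt / X) + δ)) *
    ((γ * (X / Xd) + δ) / (X / Xd + β)) *
    ((γ * (Xp / X) + η) / (Xp / X + ε)) *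
    ((X / Xm + ε) / (γ * (X / Xm) + η)) *
    ((β * (Xu / X) - ε) / (δ * (Xu / X) - η)) *
    ((δ * (X / Xv) - η) / (β * (X / Xv) - ε)) = 1 :=
  master_three_leg_product_general β γ δ ε η lam X Xt Xd Xp Xm Xu Xv Psik Psik1 Psitk Phik1 Phitk
    Phitk1 hX hXd hXm hXv hN hE hSE hS hW hNW
end

section
/- The master quad-equation of type I, (δ−βγ)λ(XY+UV) + βδ(λ²−γ)XU + (βλ²−δ)XV + γ(βλ²−δ)YU + (λ²−γ)YV = 0, where (X,U,Y,V) = (e^{x_k}, Φ̃_{k+1}, e^{x̃_k}, Ψ̃_k), is equivalent to its three-leg form centered at x_k: ((e^{x̃_k}+βe^{x_k})/(γe^{x̃_k}+δe^{x_k}))·((δe^{x_k}+λΨ̃_k)/(βλe^{x_k}+Ψ̃_k))·((λe^{x_k}−γΦ̃_{k+1})/(e^{x_k}−λΦ̃_{k+1})) = 1, whenever all denominators are nonzero. -/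
theorem three_leg_numerator_sub_denominator {R : Type*} [CommRing R] (β γ δ lam Ex Et Ψ Φ : R) :
    (Et + β * Ex) * (δ * Ex + lam * Ψ) * (lam * Ex - γ * Φ) -
        (γ * Et + δ * Ex) * (β * lam * Ex + Ψ) * (Ex - lam * Φ) =
      Ex * ((δ - β * γ) * lam * (Ex * Et + Φ * Ψ) + β * δ * (lam ^ 2 - γ) * Ex * Φ +
        (β * lam ^ 2 - δ) * Ex * Ψ + γ * (β * lam ^ 2 - δ) * Et * Φ +
        (lam ^ 2 - γ) * Et * Ψ) := by
  ring

/-- Here `Ex = e^{x_k}`, `Et = e^{x̃_k}`, `Ψ = Ψ̃_k`, `Φ = Φ̃_{k+1}`. -/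
theorem master_typeI_three_leg_form
    (β γ δ lam Ex Et Ψ Φ : ℂ)
    (hEx : Ex ≠ 0)
    (hd1 : γ * Et + δ * Ex ≠ 0)
    (hd2 : β * lam * Ex + Ψ ≠ 0)
    (hd3 : Ex - lam * Φ ≠ 0) :
    ((δ - β * γ) * lam * (Ex * Et + Φ * Ψ) + β * δ * (lam ^ 2 - γ) * Ex * Φ +
        (β * lam ^ 2 - δ) * Ex * Ψ + γ * (β * lam ^ 2 - δ) * Et * Φ +
        (lam ^ 2 - γ) * Et * Ψ = 0)
      ↔
    ((Et + β * Ex) / (γ * Et + δ * Ex)) *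
    ((δ * Ex + lam * Ψ) / (β * lam * Ex + Ψ)) *
    ((lam * Ex - γ * Φ) / (Ex - lam * Φ)) = 1 := by
  rw [div_mul_div_comm, div_mul_div_comm,
    div_eq_one_iff_eq (mul_ne_zero (mul_ne_zero hd1 hd2) hd3),
    ← sub_eq_zero (b := (γ * Et + δ * Ex) * _ * _), three_leg_numerator_sub_denominator,
    mul_eq_zero, or_iff_right hEx]
end

section
/- For system (dRTL+ l), adding the six three-leg expressions (N), (E), (SE), (S), (W), (NW) centered at x_k (each equal to 0) yields the additive discrete Toda equation: e^{x̃_k−x_k} − e^{x_k−x̲_k} = hα e^{x_{k+1}−x_k} − hα e^{x_k−x_{k-1}} − h(α−h)e^{x̲_{k+1}−x_k}/(1−hα e^{x̲_{k+1}−x_k}) + h(α−h)e^{x_k−x̃_{k-1}}/(1−hα e^{x_k−x̃_{k-1}}), with all auxiliary-variable terms cancelling telescopically. -/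
/-!
Add (N) and (S) to `h` times (E), (SE), (W), (NW). The terms in `Φ̃_{k+1}`, `Ψ_{k+1}`, `Ψ_k`
and `Φ̃_k` cancel in pairs. The two terms over `Ψ̃_k + h e^{x_k}` add up to `-(1 - hλ)`, and the
two over `e^{x_k} + h Φ_{k+1}` add up to `1 - hλ`, so these cancel as well.
-/

theorem mul_div_add_mul_div_eq_self {K : Type*} [DivisionRing K] (c a b : K) (hab : a + b ≠ 0) :
    c * a / (a + b) + c * b / (a + b) = c := by
  rw [← add_div, ← mul_add, mul_div_assoc, div_self hab, mul_one]

theorem dRTLl_sum_of_three_legs_general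
    (α h lam : ℂ) (X Ea Eb Ec Ed Eu Ev Psik Psik1 Psitk Phik1 Phitk Phitk1 : ℂ)
    (d1 : Psitk + h * X ≠ 0) (d4 : X + h * Phik1 ≠ 0)
    (hN : Ea + h * Phitk1 / X - (1 - h * lam) * Psitk / (Psitk + h * X) = 0)
    (hE : -(α * Ed) - Phitk1 / X
          + (1 - α * lam) * Psik1 / (X + α * Psik1) = 0)
    (hSE : (α - h) * Eu / (1 - h * α * Eu)
           - (1 - α * lam) * Psik1 / (X + α * Psik1)
           + (1 - h * lam) * Phik1 / (X + h * Phik1) = 0)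
    (hS : -Eb + (1 - h * lam) * X / (X + h * Phik1) - h * X / Psik = 0)
    (hW : α * Ec + X / Psik
          - (1 - α * lam) * X / (Phitk + α * X) = 0)
    (hNW : -((α - h) * Ev / (1 - h * α * Ev))
           + (1 - α * lam) * X / (Phitk + α * X)
           - (1 - h * lam) * X / (Psitk + h * X) = 0) :
    Ea - Eb = h * α * Ed - h * α * Ec
      - h * (α - h) * Eu / (1 - h * α * Eu)
      + h * (α - h) * Ev / (1 - h * α * Ev) := by
  have north := mul_div_add_mul_div_eq_self (1 - h * lam) Psitk (h * X) d1
  have south := mul_div_add_mul_div_eq_self (1 - h * lam) X (h * Phik1) d4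
  linear_combination hN + hS + h * (hE + hSE + hW + hNW) + north - south

/-- For system (dRTL+ l), the six three-leg equations (N), (E), (SE), (S), (W),
(NW) centered at `x_k` imply (by adding, with telescoping cancellation of the
auxiliary variables) the additive discrete Toda equation.
Here `X = e^{x_k}`, `Ea = e^{x̃_k−x_k}`, `Eb = e^{x_k−x̲_k}`,
`Ec = e^{x_k−x_{k-1}}`, `Ed = e^{x_{k+1}−x_k}`, `Eu = e^{x̲_{k+1}−x_k}`,
`Ev = e^{x_k−x̃_{k-1}}`. -/
theorem dRTLl_sum_of_three_legs
    (α h lam : ℂ) (X Ea Eb Ec Ed Eu Ev Psik Psik1 Psitk Phik1 Phitk Phitk1 : ℂ)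
    (hX : X ≠ 0)
    (d1 : Psitk + h * X ≠ 0) (d2 : X + α * Psik1 ≠ 0)
    (d3 : 1 - h * α * Eu ≠ 0) (d4 : X + h * Phik1 ≠ 0)
    (d5 : Psik ≠ 0) (d6 : Phitk + α * X ≠ 0)
    (d7 : 1 - h * α * Ev ≠ 0)
    (hN : Ea + h * Phitk1 / X - (1 - h * lam) * Psitk / (Psitk + h * X) = 0)
    (hE : -(α * Ed) - Phitk1 / X
          + (1 - α * lam) * Psik1 / (X + α * Psik1) = 0)
    (hSE : (α - h) * Eu / (1 - h * α * Eu)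
           - (1 - α * lam) * Psik1 / (X + α * Psik1)
           + (1 - h * lam) * Phik1 / (X + h * Phik1) = 0)
    (hS : -Eb + (1 - h * lam) * X / (X + h * Phik1) - h * X / Psik = 0)
    (hW : α * Ec + X / Psik
          - (1 - α * lam) * X / (Phitk + α * X) = 0)
    (hNW : -((α - h) * Ev / (1 - h * α * Ev))
           + (1 - α * lam) * X / (Phitk + α * X)
           - (1 - h * lam) * X / (Psitk + h * X) = 0) :
    Ea - Eb = h * α * Ed - h * α * Ec
      - h * (α - h) * Eu / (1 - h * α * Eu)
      + h * (α - h) * Ev / (1 - h * α * Ev) :=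
  dRTLl_sum_of_three_legs_general α h lam X Ea Eb Ec Ed Eu Ev Psik Psik1 Psitk Phik1 Phitk Phitk1 d1
    d4 hN hE hSE hS hW hNW
end

section
/- The system of three quad-equations for (dRTL+ l), namely (I): h(XY+UV)+YV−(1−hλ)XV+h²XU=0, (II): α(XY+UV)+YV−(1−αλ)XV+α²XU=0, and (III): (h−α)(XY+UV)+(1−αλ)YV−(1−hλ)XV+h²(1−αλ)XU−α²(1−hλ)YU=0, is 3D consistent: placing fields on the vertices of a cube with equation (I) on faces parallel to one coordinate plane, (II) on the second, and (III) on the third, the three values at the vertex (1,1,1) computed from the initial data x, x₁, x₂, x₃ (at the origin and its three neighbors) via the three pairs of side faces coincide. -/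
/-- Quad-equation (I) of system (dRTL+ l), in the vertex order `(X,U,Y,V)`. -/
def dRTLl_QI (h lam X U Y V : ℂ) : ℂ :=
  h * (X * Y + U * V) + Y * V - (1 - h * lam) * X * V + h ^ 2 * X * U

/-- Quad-equation (II) of system (dRTL+ l). -/
def dRTLl_QII (α lam X U Y V : ℂ) : ℂ :=
  α * (X * Y + U * V) + Y * V - (1 - α * lam) * X * V + α ^ 2 * X * U

/-- Quad-equation (III) of system (dRTL+ l). -/
def dRTLl_QIII (α h lam X U Y V : ℂ) : ℂ :=
  (h - α) * (X * Y + U * V) + (1 - α * lam) * Y * V - (1 - h * lam) * X * V +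
    h ^ 2 * (1 - α * lam) * X * U - α ^ 2 * (1 - h * lam) * Y * U

/-!
Each face equation is affine in each of its arguments, so when the coefficient of the unknown
vertex is nonzero it determines that vertex as a fractional linear function of the other three.
Solving the bottom faces expresses `x₁₂, x₁₃, x₂₃` rationally in the initial data, and then the
three top faces express the value at `(1,1,1)` as three rational functions of `x, x₁, x₂, x₃`.
Their agreement is an identity of rational functions, checked by clearing denominators.
-/

theorem dRTLl_QI_sub_V (h lam X U Y : ℂ) :
    dRTLl_QI h lam X U Y 1 - dRTLl_QI h lam X U Y 0 = Y + h * U - (1 - h * lam) * X := by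
  simp only [dRTLl_QI]; ring

theorem dRTLl_QII_sub_X (α lam U Y V : ℂ) :
    dRTLl_QII α lam 1 U Y V - dRTLl_QII α lam 0 U Y V =
      α * Y + α ^ 2 * U - (1 - α * lam) * V := by
  simp only [dRTLl_QII]; ring

theorem dRTLl_QIII_sub_Y (α h lam X U V : ℂ) :
    dRTLl_QIII α h lam X U 1 V - dRTLl_QIII α h lam X U 0 V =
      (h - α) * X + (1 - α * lam) * V - α ^ 2 * (1 - h * lam) * U := by
  simp only [dRTLl_QIII]; ring

noncomputable def dRTLl_QI_solV (h lam X U Y : ℂ) : ℂ :=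
  -(h * X * (Y + h * U)) / (Y + h * U - (1 - h * lam) * X)

noncomputable def dRTLl_QII_solX (α lam U Y V : ℂ) : ℂ :=
  -(V * (Y + α * U)) / (α * Y + α ^ 2 * U - (1 - α * lam) * V)

noncomputable def dRTLl_QIII_solY (α h lam X U V : ℂ) : ℂ :=
  ((1 - h * lam) * X * V - (h - α) * U * V - h ^ 2 * (1 - α * lam) * X * U) /
    ((h - α) * X + (1 - α * lam) * V - α ^ 2 * (1 - h * lam) * U)

theorem eq_dRTLl_QI_solV {h lam X U Y V : ℂ} (hD : Y + h * U - (1 - h * lam) * X ≠ 0)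
    (hQ : dRTLl_QI h lam X U Y V = 0) : V = dRTLl_QI_solV h lam X U Y := by
  rw [dRTLl_QI_solV, eq_div_iff hD]
  simp only [dRTLl_QI] at hQ
  linear_combination hQ

theorem eq_dRTLl_QII_solX {α lam X U Y V : ℂ} (hD : α * Y + α ^ 2 * U - (1 - α * lam) * V ≠ 0)
    (hQ : dRTLl_QII α lam X U Y V = 0) : X = dRTLl_QII_solX α lam U Y V := by
  rw [dRTLl_QII_solX, eq_div_iff hD]
  simp only [dRTLl_QII] at hQ
  linear_combination hQ

theorem eq_dRTLl_QIII_solY {α h lam X U Y V : ℂ}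
    (hD : (h - α) * X + (1 - α * lam) * V - α ^ 2 * (1 - h * lam) * U ≠ 0)
    (hQ : dRTLl_QIII α h lam X U Y V = 0) : Y = dRTLl_QIII_solY α h lam X U V := by
  rw [dRTLl_QIII_solY, eq_div_iff hD]
  simp only [dRTLl_QIII] at hQ
  linear_combination hQ

section Consistency

variable {α h lam x x1 x2 x3 x12 x13 x23 : ℂ}

theorem dRTLl_QIII_solY_eq_QII_solX
    (hd12 : (h - α) * x + (1 - α * lam) * x2 - α ^ 2 * (1 - h * lam) * x1 ≠ 0)
    (hd13 : α * x + α ^ 2 * x1 - (1 - α * lam) * x3 ≠ 0)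
    (hd23 : x2 + h * x - (1 - h * lam) * x3 ≠ 0)
    (e12 : x12 = dRTLl_QIII_solY α h lam x x1 x2)
    (e13 : x13 = dRTLl_QII_solX α lam x1 x x3)
    (e23 : x23 = dRTLl_QI_solV h lam x3 x x2)
    (hda : (h - α) * x3 + (1 - α * lam) * x23 - α ^ 2 * (1 - h * lam) * x13 ≠ 0)
    (hdb : α * x2 + α ^ 2 * x12 - (1 - α * lam) * x23 ≠ 0) :
    dRTLl_QIII_solY α h lam x3 x13 x23 = dRTLl_QII_solX α lam x12 x2 x23 := by
  subst e12 e13 e23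
  simp only [dRTLl_QI_solV, dRTLl_QII_solX, dRTLl_QIII_solY] at hda hdb ⊢
  rw [div_eq_div_iff hda hdb]
  -- `field_simp` only recognises the inner denominators as nonzero once they are atoms.
  generalize hd12' : (h - α) * x + (1 - α * lam) * x2 - α ^ 2 * (1 - h * lam) * x1 = d12 at hd12 ⊢
  generalize hd13' : α * x + α ^ 2 * x1 - (1 - α * lam) * x3 = d13 at hd13 ⊢
  generalize hd23' : x2 + h * x - (1 - h * lam) * x3 = d23 at hd23 ⊢
  field_simp
  subst hd12' hd13' hd23'
  ring

theorem dRTLl_QII_solX_eq_QI_solV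
    (hd12 : (h - α) * x + (1 - α * lam) * x2 - α ^ 2 * (1 - h * lam) * x1 ≠ 0)
    (hd13 : α * x + α ^ 2 * x1 - (1 - α * lam) * x3 ≠ 0)
    (hd23 : x2 + h * x - (1 - h * lam) * x3 ≠ 0)
    (e12 : x12 = dRTLl_QIII_solY α h lam x x1 x2)
    (e13 : x13 = dRTLl_QII_solX α lam x1 x x3)
    (e23 : x23 = dRTLl_QI_solV h lam x3 x x2)
    (hdb : α * x2 + α ^ 2 * x12 - (1 - α * lam) * x23 ≠ 0)
    (hdc : x12 + h * x1 - (1 - h * lam) * x13 ≠ 0) :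
    dRTLl_QII_solX α lam x12 x2 x23 = dRTLl_QI_solV h lam x13 x1 x12 := by
  subst e12 e13 e23
  simp only [dRTLl_QI_solV, dRTLl_QII_solX, dRTLl_QIII_solY] at hdb hdc ⊢
  rw [div_eq_div_iff hdb hdc]
  generalize hd12' : (h - α) * x + (1 - α * lam) * x2 - α ^ 2 * (1 - h * lam) * x1 = d12 at hd12 ⊢
  generalize hd13' : α * x + α ^ 2 * x1 - (1 - α * lam) * x3 = d13 at hd13 ⊢
  generalize hd23' : x2 + h * x - (1 - h * lam) * x3 = d23 at hd23 ⊢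
  field_simp
  subst hd12' hd13' hd23'
  ring

end Consistency

/-- 3D consistency of the system of quad-equations for (dRTL+ l):
on the cube with vertices `x, x₁, x₂, x₃, x₁₂, x₁₃, x₂₃, x₁₂₃`, equation (III)
is placed on faces parallel to the (1,2)-coordinate plane, (II) on faces
parallel to the (1,3)-plane, and (I) on faces parallel to the (2,3)-plane
(opposite faces carrying the same equation). If the bottom faces determine
`x₁₂, x₁₃, x₂₃` from the initial data `x, x₁, x₂, x₃`, and `a, b, c` denote the
values at the vertex `(1,1,1)` computed from the three top/side faces (each
face equation being uniquely solvable for its fourth argument, i.e. having a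
nonzero affine coefficient there), then `a = b = c`. -/
theorem dRTLl_system_3D_consistent
    (α h lam x x1 x2 x3 x12 x13 x23 a b c : ℂ)
    -- bottom/side faces determining x12, x13, x23
    (h12 : dRTLl_QIII α h lam x x1 x12 x2 = 0)
    (h13 : dRTLl_QII α lam x13 x1 x x3 = 0)
    (h23 : dRTLl_QI h lam x3 x x2 x23 = 0)
    -- nondegeneracy of the bottom faces in the computed argument
    (n12 : dRTLl_QIII α h lam x x1 1 x2 - dRTLl_QIII α h lam x x1 0 x2 ≠ 0)
    (n13 : dRTLl_QII α lam 1 x1 x x3 - dRTLl_QII α lam 0 x1 x x3 ≠ 0)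
    (n23 : dRTLl_QI h lam x3 x x2 1 - dRTLl_QI h lam x3 x x2 0 ≠ 0)
    -- top/side faces determining the three candidate values at (1,1,1)
    (ha : dRTLl_QIII α h lam x3 x13 a x23 = 0)
    (hb : dRTLl_QII α lam b x12 x2 x23 = 0)
    (hc : dRTLl_QI h lam x13 x1 x12 c = 0)
    -- nondegeneracy of the top faces in the computed argument
    (na : dRTLl_QIII α h lam x3 x13 1 x23 - dRTLl_QIII α h lam x3 x13 0 x23 ≠ 0)
    (nb : dRTLl_QII α lam 1 x12 x2 x23 - dRTLl_QII α lam 0 x12 x2 x23 ≠ 0)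
    (nc : dRTLl_QI h lam x13 x1 x12 1 - dRTLl_QI h lam x13 x1 x12 0 ≠ 0) :
    a = b ∧ b = c := by
  simp only [dRTLl_QI_sub_V, dRTLl_QII_sub_X, dRTLl_QIII_sub_Y] at n12 n13 n23 na nb nc
  have e12 := eq_dRTLl_QIII_solY n12 h12
  have e13 := eq_dRTLl_QII_solX n13 h13
  have e23 := eq_dRTLl_QI_solV n23 h23
  rw [eq_dRTLl_QIII_solY na ha, eq_dRTLl_QII_solX nb hb, eq_dRTLl_QI_solV nc hc]
  exact ⟨dRTLl_QIII_solY_eq_QII_solX n12 n13 n23 e12 e13 e23 na nb,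
    dRTLl_QII_solX_eq_QI_solV n12 n13 n23 e12 e13 e23 nb nc⟩
end

section
/- For the rational relativistic Toda system (dRTL+ dual): multiplying the six three-leg products (N)·(E)·(SE)·(S)·(W)·(NW) — e.g. (N): (x̃_k−x_k)·(1+h(x_k−Ψ̃_k−λ))/((x_k−Ψ̃_k+λ)(x_k−Φ̃_{k+1}−λ)) = −h, etc. — yields the discrete equation (x̃_k−x_k)/(x_k−x̲_k) = ((1+h(x̲_{k+1}−x_k))/(1+α(x̲_{k+1}−x_k)))·((1+α(x_k−x̃_{k-1}))/(1+h(x_k−x̃_{k-1})))·((1+α(x_{k+1}−x_k))/(1+α(x_k−x_{k-1}))). -/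
/-!
Each auxiliary factor occurs once in a numerator and once in a denominator among the six legs, so
their product telescopes to the equation of motion, with right-hand side `(-h) * (-(1 / h)) = 1`.
The cancellation needs the auxiliary factors to be nonzero, and this is read off from the legs
themselves: their right-hand sides do not vanish.
-/

theorem three_leg_product_telescopes {K : Type*} [Field K]
    (T D E W S₁ S₂ V₁ V₂ a₁ a₂ b c₁ c₂ f₁ f₂ g p₁ p₂ : K)
    (ha₁ : a₁ ≠ 0) (ha₂ : a₂ ≠ 0) (hb : b ≠ 0) (hc₁ : c₁ ≠ 0) (hc₂ : c₂ ≠ 0)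
    (hf₁ : f₁ ≠ 0) (hf₂ : f₂ ≠ 0) (hg : g ≠ 0) (hp₁ : p₁ ≠ 0) (hp₂ : p₂ ≠ 0) :
    (T * (a₂ / a₁) * (1 / b)) * ((1 / E) * b * (c₂ / c₁)) *
        ((S₁ / S₂) * (c₁ / c₂) * (f₂ / f₁)) * ((1 / D) * (f₁ / f₂) * g) *
        (W * (1 / g) * (p₁ / p₂)) * ((V₁ / V₂) * (p₂ / p₁) * (a₁ / a₂)) =
      T / D * (S₂ / S₁ * (V₂ / V₁) * (E / W))⁻¹ := by
  simp only [mul_inv, inv_div]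
  field_simp

theorem div_eq_of_three_legs {K : Type*} [Field K]
    {h T D E W S₁ S₂ V₁ V₂ a₁ a₂ b c₁ c₂ f₁ f₂ g p₁ p₂ : K} (hh : h ≠ 0)
    (hN : T * (a₂ / a₁) * (1 / b) = -h) (hE : (1 / E) * b * (c₂ / c₁) = 1)
    (hSE : (S₁ / S₂) * (c₁ / c₂) * (f₂ / f₁) = 1) (hS : (1 / D) * (f₁ / f₂) * g = -(1 / h))
    (hW : W * (1 / g) * (p₁ / p₂) = 1) (hNW : (V₁ / V₂) * (p₂ / p₁) * (a₁ / a₂) = 1) :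
    T / D = S₂ / S₁ * (V₂ / V₁) * (E / W) := by
  have nN := hN ▸ neg_ne_zero.mpr hh
  have nE := hE ▸ one_ne_zero (α := K)
  have nSE := hSE ▸ one_ne_zero (α := K)
  have nW := hW ▸ one_ne_zero (α := K)
  simp only [mul_ne_zero_iff, div_ne_zero_iff, ne_eq, one_ne_zero, not_false_eq_true, true_and]
    at nN nE nSE nW
  obtain ⟨⟨-, ha₂, ha₁⟩, hb⟩ := nN
  obtain ⟨-, hc₂, hc₁⟩ := nE
  obtain ⟨-, hf₂, hf₁⟩ := nSE
  obtain ⟨⟨-, hg⟩, hp₁, hp₂⟩ := nW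
  have hprod : T / D * (S₂ / S₁ * (V₂ / V₁) * (E / W))⁻¹ = 1 := by
    rw [← three_leg_product_telescopes T D E W S₁ S₂ V₁ V₂ a₁ a₂ b c₁ c₂ f₁ f₂ g p₁ p₂
      ha₁ ha₂ hb hc₁ hc₂ hf₁ hf₂ hg hp₁ hp₂, hN, hE, hSE, hS, hW, hNW]
    field_simp
  rw [eq_inv_of_mul_eq_one_left hprod, inv_inv]

/-- Here `xt = x̃_k`, `xd = x̲_k`, `xp = x_{k+1}`, `xm = x_{k-1}`, `xu = x̲_{k+1}`,
`xv = x̃_{k-1}`. -/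
theorem dRTLdual_product_of_three_legs_general
    (α h lam : ℂ) (xk xt xd xp xm xu xv Psik Psik1 Psitk Phik1 Phitk Phitk1 : ℂ)
    (hh : h ≠ 0)
    (hN : (xt - xk) * ((1 + h * (xk - Psitk - lam)) / (xk - Psitk + lam)) *
          (1 / (xk - Phitk1 - lam)) = -h)
    (hE : (1 / (1 + α * (xp - xk))) * (xk - Phitk1 - lam) *
          ((1 - α * (xk - Psik1 + lam)) / (xk - Psik1 - lam)) = 1)
    (hSE : ((1 + α * (xu - xk)) / (1 + h * (xu - xk))) *
           ((xk - Psik1 - lam) / (1 - α * (xk - Psik1 + lam))) *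
           ((1 - h * (xk - Phik1 + lam)) / (xk - Phik1 - lam)) = 1)
    (hS : (1 / (xk - xd)) *
          ((xk - Phik1 - lam) / (1 - h * (xk - Phik1 + lam))) *
          (xk - Psik + lam) = -(1 / h))
    (hW : (1 + α * (xk - xm)) * (1 / (xk - Psik + lam)) *
          ((xk - Phitk + lam) / (1 + α * (xk - Phitk - lam))) = 1)
    (hNW : ((1 + h * (xk - xv)) / (1 + α * (xk - xv))) *
           ((1 + α * (xk - Phitk - lam)) / (xk - Phitk + lam)) *
           ((xk - Psitk + lam) / (1 + h * (xk - Psitk - lam))) = 1) :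
    (xt - xk) / (xk - xd) =
      ((1 + h * (xu - xk)) / (1 + α * (xu - xk))) *
      ((1 + α * (xk - xv)) / (1 + h * (xk - xv))) *
      ((1 + α * (xp - xk)) / (1 + α * (xk - xm))) :=
  div_eq_of_three_legs hh hN hE hSE hS hW hNW

/-- For the rational relativistic Toda system (dRTL+ dual): the six three-leg
equations (N), (E), (SE), (S), (W), (NW) centered at `x_k` imply (by
multiplication, with telescoping cancellation of the auxiliary variables) the
discrete equation of motion. Here `xt = x̃_k`, `xd = x̲_k`, `xp = x_{k+1}`,
`xm = x_{k-1}`, `xu = x̲_{k+1}`, `xv = x̃_{k-1}`. -/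
theorem dRTLdual_product_of_three_legs
    (α h lam : ℂ) (xk xt xd xp xm xu xv Psik Psik1 Psitk Phik1 Phitk Phitk1 : ℂ)
    (hh : h ≠ 0)
    (e1 : xk - xd ≠ 0)
    (e2 : 1 + α * (xu - xk) ≠ 0) (e3 : 1 + h * (xu - xk) ≠ 0)
    (e4 : 1 + h * (xk - xv) ≠ 0) (e5 : 1 + α * (xk - xv) ≠ 0)
    (e6 : 1 + α * (xp - xk) ≠ 0) (e7 : 1 + α * (xk - xm) ≠ 0)
    (d1 : xk - Psitk + lam ≠ 0) (d2 : xk - Phitk1 - lam ≠ 0)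
    (d3 : 1 + h * (xk - Psitk - lam) ≠ 0)
    (d4 : xk - Psik1 - lam ≠ 0) (d5 : 1 - α * (xk - Psik1 + lam) ≠ 0)
    (d6 : xk - Phik1 - lam ≠ 0) (d7 : 1 - h * (xk - Phik1 + lam) ≠ 0)
    (d8 : xk - Psik + lam ≠ 0) (d9 : xk - Phitk + lam ≠ 0)
    (d10 : 1 + α * (xk - Phitk - lam) ≠ 0)
    (hN : (xt - xk) * ((1 + h * (xk - Psitk - lam)) / (xk - Psitk + lam)) *
          (1 / (xk - Phitk1 - lam)) = -h)
    (hE : (1 / (1 + α * (xp - xk))) * (xk - Phitk1 - lam) *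
          ((1 - α * (xk - Psik1 + lam)) / (xk - Psik1 - lam)) = 1)
    (hSE : ((1 + α * (xu - xk)) / (1 + h * (xu - xk))) *
           ((xk - Psik1 - lam) / (1 - α * (xk - Psik1 + lam))) *
           ((1 - h * (xk - Phik1 + lam)) / (xk - Phik1 - lam)) = 1)
    (hS : (1 / (xk - xd)) *
          ((xk - Phik1 - lam) / (1 - h * (xk - Phik1 + lam))) *
          (xk - Psik + lam) = -(1 / h))
    (hW : (1 + α * (xk - xm)) * (1 / (xk - Psik + lam)) *
          ((xk - Phitk + lam) / (1 + α * (xk - Phitk - lam))) = 1)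
    (hNW : ((1 + h * (xk - xv)) / (1 + α * (xk - xv))) *
           ((1 + α * (xk - Phitk - lam)) / (xk - Phitk + lam)) *
           ((xk - Psitk + lam) / (1 + h * (xk - Psitk - lam))) = 1) :
    (xt - xk) / (xk - xd) =
      ((1 + h * (xu - xk)) / (1 + α * (xu - xk))) *
      ((1 + α * (xk - xv)) / (1 + h * (xk - xv))) *
      ((1 + α * (xp - xk)) / (1 + α * (xk - xm))) :=
  dRTLdual_product_of_three_legs_general α h lam xk xt xd xp xm xu xv Psik Psik1 Psitk Phik1 Phitk
    Phitk1 hh hN hE hSE hS hW hNW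
end

section
/- The change of variables x ↦ κx with parameters β ↦ −1+κβ, δ ↦ −1+κδ, ε ↦ −1+κε, η ↦ −1+κη in the γ = 0 master equation, followed by the limit κ → 0, gives the rational equation ((x̃_k−x_k+β)/(x_k−x̲_k+β))·((x_k−x_{k-1}+ε)/(x_{k+1}−x_k+ε))·((x̲_{k+1}−x_k−β+ε)/(x̲_{k+1}−x_k−δ+η))·((x_k−x̃_{k-1}−δ+η)/(x_k−x̃_{k-1}−β+ε)) = 1. Precisely: for each factor, lim_{κ→0} (e^{κa} + (−1+κβ))/κ = a + β (and analogously for the other factors), so the limit of the product equation is the stated rational equation. -/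
open Filter Topology Complex

/-! Every numerator and denominator vanishes at `κ = 0`, so by L'Hôpital's rule each factor
tends to the ratio of the derivatives at `0`; these are `a + β` for `exp (κ a) - 1 + κ β`
and `-(u - β + ε)` for `(-1 + κ β) exp (κ u) - (-1 + κ ε)`. -/

theorem tendsto_div_of_hasDerivAt_of_eq_zero {𝕜 : Type*} [NontriviallyNormedField 𝕜]
    {f g : 𝕜 → 𝕜} {f' g' x : 𝕜} (hf : HasDerivAt f f' x) (hg : HasDerivAt g g' x)
    (hfx : f x = 0) (hgx : g x = 0) (hg' : g' ≠ 0) :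
    Tendsto (fun y => f y / g y) (𝓝[≠] x) (𝓝 (f' / g')) := by
  refine ((hasDerivAt_iff_tendsto_slope.mp hf).div
    (hasDerivAt_iff_tendsto_slope.mp hg) hg').congr' ?_
  filter_upwards [self_mem_nhdsWithin] with y (hy : y ≠ x)
  rw [Pi.div_apply, slope_def_field, slope_def_field, hfx, hgx, sub_zero, sub_zero,
    div_div_div_cancel_right₀ (sub_ne_zero.mpr hy)]

theorem hasDerivAt_exp_mul_sub_one_add_mul (a β : ℂ) :
    HasDerivAt (fun κ : ℂ => exp (κ * a) - 1 + κ * β) (a + β) 0 := by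
  have h : HasDerivAt (fun κ : ℂ => exp (κ * a) - 1 + κ * β)
      (exp (0 * a) * (1 * a) + 1 * β) 0 :=
    ((((hasDerivAt_id' 0).mul_const a).cexp).sub_const 1).add ((hasDerivAt_id' 0).mul_const β)
  simpa using h

theorem hasDerivAt_affine_mul_exp_sub_affine (u β ε : ℂ) :
    HasDerivAt (fun κ : ℂ => (-1 + κ * β) * exp (κ * u) - (-1 + κ * ε))
      (-(u - β + ε)) 0 := by
  have h : HasDerivAt (fun κ : ℂ => (-1 + κ * β) * exp (κ * u) - (-1 + κ * ε))
      (1 * β * exp (0 * u) + (-1 + 0 * β) * (exp (0 * u) * (1 * u)) - 1 * ε) 0 :=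
    ((((hasDerivAt_id' 0).mul_const β).const_add (-1)).mul
      ((hasDerivAt_id' 0).mul_const u).cexp).sub
      (((hasDerivAt_id' 0).mul_const ε).const_add (-1))
  convert h using 1
  simp
  ring

theorem tendsto_exp_ratio (a b β : ℂ) (h : b + β ≠ 0) :
    Tendsto (fun κ : ℂ => (exp (κ * a) - 1 + κ * β) / (exp (κ * b) - 1 + κ * β))
      (𝓝[≠] 0) (𝓝 ((a + β) / (b + β))) :=
  tendsto_div_of_hasDerivAt_of_eq_zero (hasDerivAt_exp_mul_sub_one_add_mul a β)
    (hasDerivAt_exp_mul_sub_one_add_mul b β) (by simp) (by simp) h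

theorem tendsto_affine_mul_exp_ratio (u β ε δ η : ℂ) (h : u - δ + η ≠ 0) :
    Tendsto (fun κ : ℂ =>
      ((-1 + κ * β) * exp (κ * u) - (-1 + κ * ε)) /
        ((-1 + κ * δ) * exp (κ * u) - (-1 + κ * η)))
      (𝓝[≠] 0) (𝓝 ((u - β + ε) / (u - δ + η))) := by
  rw [← neg_div_neg_eq]
  exact tendsto_div_of_hasDerivAt_of_eq_zero (hasDerivAt_affine_mul_exp_sub_affine u β ε)
    (hasDerivAt_affine_mul_exp_sub_affine u δ η) (by simp) (by simp) (neg_ne_zero.mpr h)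

theorem master_rational_limit_general
    (β δ' ε η a b c d u v : ℂ)
    (h2 : b + β ≠ 0) (h4 : d + ε ≠ 0)
    (h6 : u - δ' + η ≠ 0)
    (h8 : v - β + ε ≠ 0) :
    Tendsto (fun κ : ℂ =>
      ((exp (κ * a) - 1 + κ * β) / (exp (κ * b) - 1 + κ * β)) *
      ((exp (κ * c) - 1 + κ * ε) / (exp (κ * d) - 1 + κ * ε)) *
      (((-1 + κ * β) * exp (κ * u) - (-1 + κ * ε)) /
        ((-1 + κ * δ') * exp (κ * u) - (-1 + κ * η))) *
      (((-1 + κ * δ') * exp (κ * v) - (-1 + κ * η)) /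
        ((-1 + κ * β) * exp (κ * v) - (-1 + κ * ε))))
      (𝓝[≠] 0)
      (𝓝 (((a + β) / (b + β)) * ((c + ε) / (d + ε)) *
        ((u - β + ε) / (u - δ' + η)) * ((v - δ' + η) / (v - β + ε)))) :=
  (((tendsto_exp_ratio a b β h2).mul (tendsto_exp_ratio c d ε h4)).mul
    (tendsto_affine_mul_exp_ratio u β ε δ' η h6)).mul
    (tendsto_affine_mul_exp_ratio v δ' η β ε h8)

/-- The change of variables `x ↦ κx` with parameters `β ↦ −1+κβ`,
`δ ↦ −1+κδ`, `ε ↦ −1+κε`, `η ↦ −1+κη` in the `γ = 0` master equation,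
followed by the limit `κ → 0`, gives the rational master Toda equation:
the left-hand side of the substituted equation tends, as `κ → 0`, to
`((a+β)/(b+β))·((c+ε)/(d+ε))·((u−β+ε)/(u−δ+η))·((v−δ+η)/(v−β+ε))`.
Here `a = x̃_k−x_k`, `b = x_k−x̲_k`, `c = x_k−x_{k-1}`, `d = x_{k+1}−x_k`,
`u = x̲_{k+1}−x_k`, `v = x_k−x̃_{k-1}`. -/
theorem master_rational_limit
    (β δ' ε η a b c d u v : ℂ)
    (h1 : a + β ≠ 0) (h2 : b + β ≠ 0) (h3 : c + ε ≠ 0) (h4 : d + ε ≠ 0)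
    (h5 : u - β + ε ≠ 0) (h6 : u - δ' + η ≠ 0)
    (h7 : v - δ' + η ≠ 0) (h8 : v - β + ε ≠ 0) :
    Tendsto (fun κ : ℂ =>
      ((exp (κ * a) - 1 + κ * β) / (exp (κ * b) - 1 + κ * β)) *
      ((exp (κ * c) - 1 + κ * ε) / (exp (κ * d) - 1 + κ * ε)) *
      (((-1 + κ * β) * exp (κ * u) - (-1 + κ * ε)) /
        ((-1 + κ * δ') * exp (κ * u) - (-1 + κ * η))) *
      (((-1 + κ * δ') * exp (κ * v) - (-1 + κ * η)) /
        ((-1 + κ * β) * exp (κ * v) - (-1 + κ * ε))))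
      (𝓝[≠] 0)
      (𝓝 (((a + β) / (b + β)) * ((c + ε) / (d + ε)) *
        ((u - β + ε) / (u - δ' + η)) * ((v - δ' + η) / (v - β + ε)))) :=
  master_rational_limit_general β δ' ε η a b c d u v h2 h4 h6 h8
end

section
/- Discrete zero curvature representation for equation (dRTL+ dual): with L_k = [[−λ+x_k, λ²+λαe^{p_k}−(x_k−αe^{p_k})x_k−e^{p_k}],[1, −λ−x_k+αe^{p_k}]] and V_k = I + h·[[−λ+x_k, λ²+λ(x_k−x̃_{k-1}+αe^{p̃_{k-1}})−(x̃_{k-1}−αe^{p̃_{k-1}})x_k],[1, −λ−x̃_{k-1}+αe^{p̃_{k-1}}]], the matrix equation L̃_k V_k = V_{k+1} L_k (as an identity of 2×2 matrices, polynomial in λ) holds whenever the variables satisfy the Lagrangian equations of motion (the two momentum relations h e^{p_k} = (x_k−x̲_k)(1+h(x̲_{k+1}−x_k))/(1+α(x̲_{k+1}−x_k)) and h e^{p_k} = (x̃_k−x_k)·((1+α(x_k−x_{k-1}))/(1+α(x_{k+1}−x_k)))·((1+h(x_k−x̃_{k-1}))/(1+α(x_k−x̃_{k-1}))) at all relevant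 sites). -/
/-!
Substituting the relation (p1) at site `k - 1` into (p2) eliminates `x_{k-1}`:
`h e^{p_k} = (x̃_k - x_k)(1 + h(x_k - x̃_{k-1}) + αh e^{p̃_{k-1}}) / (1 + α(x_{k+1} - x_k))`.
Once `e^{p̃_k}` and `e^{p_k}` are replaced by their values from (p1) and this relation, every
entry of `L̃_k V_k - V_{k+1} L_k` is a rational function that vanishes identically, with
`e^{p̃_{k-1}}` left free.
-/

/-- The transition matrix `L_k` of the zero curvature representation of
equation (dRTL+ dual); `P = e^{p_k}`. -/
def dRTLdual_L (α lam x P : ℂ) : Matrix (Fin 2) (Fin 2) ℂ :=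
  !![-lam + x, lam ^ 2 + lam * α * P - (x - α * P) * x - P;
     1, -lam - x + α * P]

/-- The transition matrix `V_k` of the zero curvature representation of
equation (dRTL+ dual); `x = x_k`, `y = x̃_{k-1}`, `P = e^{p̃_{k-1}}`. -/
def dRTLdual_V (α h lam x y P : ℂ) : Matrix (Fin 2) (Fin 2) ℂ :=
  1 + h • !![-lam + x, lam ^ 2 + lam * (x - y + α * P) - (y - α * P) * x;
             1, -lam - y + α * P]

theorem dRTLdual_V_fin_two (α h lam x y P : ℂ) :
    dRTLdual_V α h lam x y P =
      !![1 + h * (-lam + x), h * (lam ^ 2 + lam * (x - y + α * P) - (y - α * P) * x);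
         h, 1 + h * (-lam - y + α * P)] := by
  rw [dRTLdual_V, Matrix.one_fin_two, Matrix.smul_of, Matrix.of_add_of]
  simp

theorem one_add_mul_sub_mul_div_eq_of_mul_eq {K : Type*} [Field K] {α h xm xk ym Qm : K}
    (e1 : 1 + α * (xk - ym) ≠ 0)
    (hQM : h * Qm = (ym - xm) * (1 + h * (xk - ym)) / (1 + α * (xk - ym))) :
    (1 + α * (xk - xm)) * ((1 + h * (xk - ym)) / (1 + α * (xk - ym))) =
      1 + h * (xk - ym) + α * h * Qm := by
  rw [mul_assoc α h Qm, hQM]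
  field_simp
  ring

theorem dRTLdual_zero_curvature_of_momenta {α h xk xp ym yk Pk Qk Qm : ℂ} (hh : h ≠ 0)
    (e2 : 1 + α * (xp - yk) ≠ 0) (e4 : 1 + α * (xp - xk) ≠ 0)
    (hQK : h * Qk = (yk - xk) * (1 + h * (xp - yk)) / (1 + α * (xp - yk)))
    (hPK : h * Pk = (yk - xk) * (1 + h * (xk - ym) + α * h * Qm) / (1 + α * (xp - xk)))
    (lam : ℂ) :
    dRTLdual_L α lam yk Qk * dRTLdual_V α h lam xk ym Qm =
      dRTLdual_V α h lam xp yk Qk * dRTLdual_L α lam xk Pk := by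
  obtain rfl : Qk = (yk - xk) * (1 + h * (xp - yk)) / (1 + α * (xp - yk)) / h := by
    rw [eq_div_iff hh, mul_comm, hQK]
  obtain rfl : Pk = (yk - xk) * (1 + h * (xk - ym) + α * h * Qm) / (1 + α * (xp - xk)) / h := by
    rw [eq_div_iff hh, mul_comm, hPK]
  rw [dRTLdual_V_fin_two, dRTLdual_V_fin_two, dRTLdual_L, dRTLdual_L, Matrix.mul_fin_two,
    Matrix.mul_fin_two]
  congr 1
  refine Matrix.vec2_eq (Matrix.vec2_eq ?_ ?_) (Matrix.vec2_eq ?_ ?_) <;> field_simp <;> ring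

/-- Here `xm = x_{k-1}`, `xk = x_k`, `xp = x_{k+1}`, `ym = x̃_{k-1}`,
`yk = x̃_k`, `Pk = e^{p_k}`, `Qk = e^{p̃_k}`, `Qm = e^{p̃_{k-1}}`. -/
theorem dRTLdual_discrete_zero_curvature_general
    (α h xm xk xp ym yk Pk Qk Qm : ℂ)
    (hh : h ≠ 0)
    (e1 : 1 + α * (xk - ym) ≠ 0) (e2 : 1 + α * (xp - yk) ≠ 0)
    (e4 : 1 + α * (xp - xk) ≠ 0)
    -- (p1) at site k−1, time t+h
    (hQM : h * Qm = (ym - xm) * (1 + h * (xk - ym)) / (1 + α * (xk - ym)))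
    -- (p1) at site k, time t+h
    (hQK : h * Qk = (yk - xk) * (1 + h * (xp - yk)) / (1 + α * (xp - yk)))
    -- (p2) at site k, time t
    (hPK : h * Pk = (yk - xk) * ((1 + α * (xk - xm)) / (1 + α * (xp - xk))) *
                    ((1 + h * (xk - ym)) / (1 + α * (xk - ym)))) :
    ∀ lam : ℂ,
      dRTLdual_L α lam yk Qk * dRTLdual_V α h lam xk ym Qm =
      dRTLdual_V α h lam xp yk Qk * dRTLdual_L α lam xk Pk := by
  have hPK' : h * Pk = (yk - xk) * (1 + h * (xk - ym) + α * h * Qm) / (1 + α * (xp - xk)) := by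
    rw [hPK, ← one_add_mul_sub_mul_div_eq_of_mul_eq e1 hQM]
    ring
  exact dRTLdual_zero_curvature_of_momenta hh e2 e4 hQK hPK'

/-- Discrete zero curvature representation for equation (dRTL+ dual): the
matrix identity `L̃_k V_k = V_{k+1} L_k` holds (as an identity of 2×2 matrices,
polynomially in `λ`) whenever the variables satisfy the Lagrangian equations of
motion. Here `xm = x_{k-1}`, `xk = x_k`, `xp = x_{k+1}`, `ym = x̃_{k-1}`,
`yk = x̃_k`, `Pk = e^{p_k}`, `Qk = e^{p̃_k}`, `Qm = e^{p̃_{k-1}}`. -/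
theorem dRTLdual_discrete_zero_curvature
    (α h xm xk xp ym yk Pk Qk Qm : ℂ)
    (hh : h ≠ 0)
    (e1 : 1 + α * (xk - ym) ≠ 0) (e2 : 1 + α * (xp - yk) ≠ 0)
    (e3 : 1 + α * (xk - xm) ≠ 0) (e4 : 1 + α * (xp - xk) ≠ 0)
    -- (p1) at site k−1, time t+h
    (hQM : h * Qm = (ym - xm) * (1 + h * (xk - ym)) / (1 + α * (xk - ym)))
    -- (p1) at site k, time t+h
    (hQK : h * Qk = (yk - xk) * (1 + h * (xp - yk)) / (1 + α * (xp - yk)))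
    -- (p2) at site k, time t
    (hPK : h * Pk = (yk - xk) * ((1 + α * (xk - xm)) / (1 + α * (xp - xk))) *
                    ((1 + h * (xk - ym)) / (1 + α * (xk - ym)))) :
    ∀ lam : ℂ,
      dRTLdual_L α lam yk Qk * dRTLdual_V α h lam xk ym Qm =
      dRTLdual_V α h lam xp yk Qk * dRTLdual_L α lam xk Pk :=
  dRTLdual_discrete_zero_curvature_general α h xm xk xp ym yk Pk Qk Qm hh e1 e2 e4 hQM hQK hPK
end

section
/- The quad-equation of type III for system (dRTL+ m), (h−α)λ(XY+UV) − h(λ²+α)XU − (λ²+h)XV + α(λ²+h)YU + (λ²+α)YV = 0 with (V,Y,U,X) = (e^{x_k}, Ψ_{k+1}, e^{x̲_{k+1}}, Φ_{k+1}), is equivalent (for nonzero denominators) to its three-leg form centered at x_k: ((1+αe^{x̲_{k+1}−x_k})/(1+he^{x̲_{k+1}−x_k}))·((e^{x_k}−λΨ_{k+1})/(λe^{x_k}+αΨ_{k+1}))·((λe^{x_k}+hΦ_{k+1})/(e^{x_k}−λΦ_{k+1})) = 1. -/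
/-!
Clearing denominators, the three-leg product equals one iff
`(V + αU)(V − λY)(λV + hX) = (V + hU)(λV + αY)(V − λX)`, and the difference of the two sides
is `−V` times the quad-polynomial. Since `V = e^{x_k} ≠ 0`, the two equations are equivalent.
-/

section ThreeLeg

variable {K : Type*} [Field K]

def typeIIIQuad (α h lam V Y U X : K) : K :=
  (h - α) * lam * (X * Y + U * V) - h * (lam ^ 2 + α) * X * U -
    (lam ^ 2 + h) * X * V + α * (lam ^ 2 + h) * Y * U + (lam ^ 2 + α) * Y * V

theorem threeLeg_numerator_sub_denominator (α h lam V Y U X : K) :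
    (V + α * U) * (V - lam * Y) * (lam * V + h * X) -
        (V + h * U) * (lam * V + α * Y) * (V - lam * X) =
      -V * typeIIIQuad α h lam V Y U X := by
  unfold typeIIIQuad
  ring

theorem one_add_mul_div_eq {V : K} (hV : V ≠ 0) (c U : K) :
    1 + c * (U / V) = (V + c * U) / V := by
  rw [← mul_div_assoc, one_add_div hV]

theorem threeLeg_product_eq_div {α h lam V Y U X : K} (hV : V ≠ 0) :
    (1 + α * (U / V)) / (1 + h * (U / V)) * ((V - lam * Y) / (lam * V + α * Y)) *
        ((lam * V + h * X) / (V - lam * X)) =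
      (V + α * U) * (V - lam * Y) * (lam * V + h * X) /
        ((V + h * U) * (lam * V + α * Y) * (V - lam * X)) := by
  rw [one_add_mul_div_eq hV, one_add_mul_div_eq hV, div_div_div_cancel_right₀ hV,
    div_mul_div_comm, div_mul_div_comm]

theorem typeIIIQuad_eq_zero_iff_threeLeg {α h lam V Y U X : K} (hV : V ≠ 0)
    (hVU : 1 + h * (U / V) ≠ 0) (hVY : lam * V + α * Y ≠ 0) (hVX : V - lam * X ≠ 0) :
    typeIIIQuad α h lam V Y U X = 0 ↔
      (1 + α * (U / V)) / (1 + h * (U / V)) * ((V - lam * Y) / (lam * V + α * Y)) *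
        ((lam * V + h * X) / (V - lam * X)) = 1 := by
  have hVU' : V + h * U ≠ 0 := by
    rw [one_add_mul_div_eq hV] at hVU
    exact (div_ne_zero_iff.mp hVU).1
  rw [threeLeg_product_eq_div hV, div_eq_one_iff_eq (mul_ne_zero (mul_ne_zero hVU' hVY) hVX),
    ← sub_eq_zero (b := (V + h * U) * _ * _), threeLeg_numerator_sub_denominator, neg_mul,
    neg_eq_zero, mul_eq_zero, or_iff_right hV]

end ThreeLeg

theorem dRTLm_typeIII_three_leg_form_general
    (α h lam Ex Eu Ψ Φ : ℂ)
    (hEx : Ex ≠ 0)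
    (hd1 : 1 + h * (Eu / Ex) ≠ 0)
    (hd2 : lam * Ex + α * Ψ ≠ 0)
    (hd3 : Ex - lam * Φ ≠ 0) :
    ((h - α) * lam * (Φ * Ψ + Eu * Ex) - h * (lam ^ 2 + α) * Φ * Eu -
        (lam ^ 2 + h) * Φ * Ex + α * (lam ^ 2 + h) * Ψ * Eu +
        (lam ^ 2 + α) * Ψ * Ex = 0)
      ↔
    ((1 + α * (Eu / Ex)) / (1 + h * (Eu / Ex))) *
    ((Ex - lam * Ψ) / (lam * Ex + α * Ψ)) *
    ((lam * Ex + h * Φ) / (Ex - lam * Φ)) = 1 :=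
  typeIIIQuad_eq_zero_iff_threeLeg hEx hd1 hd2 hd3

/-- The quad-equation of type III for system (dRTL+ m),
`(h−α)λ(XY+UV) − h(λ²+α)XU − (λ²+h)XV + α(λ²+h)YU + (λ²+α)YV = 0`
with `(V,Y,U,X) = (e^{x_k}, Ψ_{k+1}, e^{x̲_{k+1}}, Φ_{k+1})`,
is equivalent to its three-leg form centered at `x_k`.
Here `Ex = e^{x_k}` and `Eu = e^{x̲_{k+1}}`. -/
theorem dRTLm_typeIII_three_leg_form
    (α h lam Ex Eu Ψ Φ : ℂ)
    (hEx : Ex ≠ 0) (hEu : Eu ≠ 0)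
    (hd1 : 1 + h * (Eu / Ex) ≠ 0)
    (hd2 : lam * Ex + α * Ψ ≠ 0)
    (hd3 : Ex - lam * Φ ≠ 0) :
    ((h - α) * lam * (Φ * Ψ + Eu * Ex) - h * (lam ^ 2 + α) * Φ * Eu -
        (lam ^ 2 + h) * Φ * Ex + α * (lam ^ 2 + h) * Ψ * Eu +
        (lam ^ 2 + α) * Ψ * Ex = 0)
      ↔
    ((1 + α * (Eu / Ex)) / (1 + h * (Eu / Ex))) *
    ((Ex - lam * Ψ) / (lam * Ex + α * Ψ)) *
    ((lam * Ex + h * Φ) / (Ex - lam * Φ)) = 1 :=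
  dRTLm_typeIII_three_leg_form_general α h lam Ex Eu Ψ Φ hEx hd1 hd2 hd3
end

section
/- Specializing the master system parameters to β = η = −1, δ = h, ε = 1/α recovers, after clearing denominators and rescaling, the three quad-equations of system (dRTL+ m): equation (I) of the master system becomes (up to an overall nonzero factor) hλ(XY+UV) − hλ²XU − (λ²+h)XV + λ²YV = 0 when additionally γ = 0; similarly master equations (II) and (III) with γ = 0 become αλ(XY+UV) − αλ²XU − (λ²+α)XV + λ²YV = 0 (up to multiplying by α and sign conventions) and (h−α)λ(XY+UV) − h(λ²+α)XU − (λ²+h)XV + α(λ²+h)YU + (λ²+α)YV = 0 respectively, i.e., each specialized master polynomial is a nonzero constant multiple of the corresponding (dRTL+ m) polynomial. -/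
theorem master_specializes_to_dRTLm_system_general
    (α h : ℂ) (hα : α ≠ 0) :
    ∃ cI cII cIII : ℂ, cI ≠ 0 ∧ cII ≠ 0 ∧ cIII ≠ 0 ∧
      ∀ X Y U V lam : ℂ,
        -- master (I) with β = −1, γ = 0, δ = h
        ((h - (-1) * 0) * lam * (X * Y + U * V) +
            (-1) * h * (lam ^ 2 - 0) * X * U + ((-1) * lam ^ 2 - h) * X * V +
            0 * ((-1) * lam ^ 2 - h) * Y * U + (lam ^ 2 - 0) * Y * V
          = cI * (h * lam * (X * Y + U * V) - h * lam ^ 2 * X * U -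
              (lam ^ 2 + h) * X * V + lam ^ 2 * Y * V)) ∧
        -- master (II) with γ = 0, ε = 1/α, η = −1
        (((-1) - 0 * (1 / α)) * lam * (X * Y + U * V) +
            (lam ^ 2 - 0) * X * U + ((1 / α) * lam ^ 2 - (-1)) * X * V +
            0 * ((1 / α) * lam ^ 2 - (-1)) * Y * U +
            (1 / α) * (-1) * (lam ^ 2 - 0) * Y * V
          = cII * (α * lam * (X * Y + U * V) - α * lam ^ 2 * X * U -
              (lam ^ 2 + α) * X * V + lam ^ 2 * Y * V)) ∧
        -- master (III) with β = η = −1, δ = h, ε = 1/α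
        (((-1) * (-1) - h * (1 / α)) * lam * (X * Y + U * V) -
            (-1) * h * ((1 / α) * lam ^ 2 - (-1)) * X * U +
            (1 / α) * (-1) * ((-1) * lam ^ 2 - h) * X * V +
            ((-1) * lam ^ 2 - h) * Y * U - ((1 / α) * lam ^ 2 - (-1)) * Y * V
          = cIII * ((h - α) * lam * (X * Y + U * V) -
              h * (lam ^ 2 + α) * X * U - (lam ^ 2 + h) * X * V +
              α * (lam ^ 2 + h) * Y * U + (lam ^ 2 + α) * Y * V)) := by
  have hc : -1 / α ≠ 0 := div_ne_zero (neg_ne_zero.mpr one_ne_zero) hα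
  refine ⟨1, -1 / α, -1 / α, one_ne_zero, hc, hc, fun X Y U V lam => ⟨by ring, ?_, ?_⟩⟩ <;>
    field_simp <;> ring

/-- Specializing the parameters of the master system to `γ = 0`, `β = η = −1`,
`δ = h`, `ε = 1/α` recovers the three quad-equations of system (dRTL+ m):
each specialized master polynomial is a nonzero constant multiple of the
corresponding (dRTL+ m) polynomial, as a polynomial function of
`X, Y, U, V, λ`. -/
theorem master_specializes_to_dRTLm_system
    (α h : ℂ) (hα : α ≠ 0) (hh : h ≠ 0) :
    ∃ cI cII cIII : ℂ, cI ≠ 0 ∧ cII ≠ 0 ∧ cIII ≠ 0 ∧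
      ∀ X Y U V lam : ℂ,
        -- master (I) with β = −1, γ = 0, δ = h
        ((h - (-1) * 0) * lam * (X * Y + U * V) +
            (-1) * h * (lam ^ 2 - 0) * X * U + ((-1) * lam ^ 2 - h) * X * V +
            0 * ((-1) * lam ^ 2 - h) * Y * U + (lam ^ 2 - 0) * Y * V
          = cI * (h * lam * (X * Y + U * V) - h * lam ^ 2 * X * U -
              (lam ^ 2 + h) * X * V + lam ^ 2 * Y * V)) ∧
        -- master (II) with γ = 0, ε = 1/α, η = −1
        (((-1) - 0 * (1 / α)) * lam * (X * Y + U * V) +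
            (lam ^ 2 - 0) * X * U + ((1 / α) * lam ^ 2 - (-1)) * X * V +
            0 * ((1 / α) * lam ^ 2 - (-1)) * Y * U +
            (1 / α) * (-1) * (lam ^ 2 - 0) * Y * V
          = cII * (α * lam * (X * Y + U * V) - α * lam ^ 2 * X * U -
              (lam ^ 2 + α) * X * V + lam ^ 2 * Y * V)) ∧
        -- master (III) with β = η = −1, δ = h, ε = 1/α
        (((-1) * (-1) - h * (1 / α)) * lam * (X * Y + U * V) -
            (-1) * h * ((1 / α) * lam ^ 2 - (-1)) * X * U +
            (1 / α) * (-1) * ((-1) * lam ^ 2 - h) * X * V +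
            ((-1) * lam ^ 2 - h) * Y * U - ((1 / α) * lam ^ 2 - (-1)) * Y * V
          = cIII * ((h - α) * lam * (X * Y + U * V) -
              h * (lam ^ 2 + α) * X * U - (lam ^ 2 + h) * X * V +
              α * (lam ^ 2 + h) * Y * U + (lam ^ 2 + α) * Y * V)) :=
  master_specializes_to_dRTLm_system_general α h hα
end
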